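/- arXiv:2503.22371 — 2 statements merged into one kernel-verified Lean document; each statement's English description precedes it below -/
import Mathlib

section
/- Let 1 < p < q < N, set p* := Np/(N−p) and q* := Nq/(N−q). Let θ > 0, S > 0, and let x, y ≥ 0 with x + y > 0. If x + y ≤ θ S (x^{p*/p} + y^{q*/q}), then x + y ≥ C̃ · min{ θ^{−p/(p*−p)}, θ^{−q/(q*−q)} }, where C̃ := min{ (2S)^{−q/(q*−q)}, S^{−p/(p*−p)} }. -/
open Real

private lemma real_superadd {x y z : ℝ} (hx : 0 ≤ x) (hy : 0 ≤ y) (hz : 1 ≤ z) :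
    x ^ z + y ^ z ≤ (x + y) ^ z := by
  lift x to NNReal using hx
  lift y to NNReal using hy
  exact_mod_cast NNReal.add_rpow_le_rpow_add x y hz

private lemma key_aux {t c E e : ℝ} (ht : 0 < t) (hc : 0 < c) (hE : 1 < E)
    (hee : e * (E - 1) = 1) (h : t ≤ c * t ^ E) : c ^ (-e) ≤ t := by
  have hE1 : 0 < E - 1 := by linarith
  have he : 0 < e := by nlinarith
  have h1 : c⁻¹ ≤ t ^ (E - 1) := by
    have hsplit : t ^ (E - 1) * t = t ^ E := by
      rw [← Real.rpow_add_one ht.ne' (E - 1)]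
      norm_num
    rw [← hsplit] at h
    have htE : 0 < t ^ (E - 1) := Real.rpow_pos_of_pos ht _
    rw [inv_le_iff_one_le_mul₀ hc]
    nlinarith
  have h2 : (c⁻¹) ^ e ≤ (t ^ (E - 1)) ^ e :=
    Real.rpow_le_rpow (by positivity) h1 he.le
  have h3 : (E - 1) * e = 1 := by rw [mul_comm]; exact hee
  calc c ^ (-e) = (c⁻¹) ^ e := by
        rw [Real.rpow_neg hc.le, Real.inv_rpow hc.le]
    _ ≤ (t ^ (E - 1)) ^ e := h2
    _ = t := by rw [← Real.rpow_mul ht.le, h3, Real.rpow_one]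

/-- The key elementary estimate (claim (3.9) in Step 2 of Lemma 3.1): for
`1 < p < q < N`, `p* = Np/(N-p)`, `q* = Nq/(N-q)`, `θ, S > 0` and `x, y ≥ 0` with
`x + y > 0`, if `x + y ≤ θ S (x^{p*/p} + y^{q*/q})` then
`x + y ≥ C̃ min{θ^{-p/(p*-p)}, θ^{-q/(q*-q)}}` where
`C̃ = min{(2S)^{-q/(q*-q)}, S^{-p/(p*-p)}}`. -/
theorem concentration_lower_bound {N : ℕ}
    (p q ps qs θ S x y : ℝ)
    (hp1 : 1 < p) (hpq : p < q) (hqN : q < N)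
    (hps : ps = N * p / (N - p)) (hqs : qs = N * q / (N - q))
    (hθ : 0 < θ) (hS : 0 < S)
    (hx : 0 ≤ x) (hy : 0 ≤ y) (hxy : 0 < x + y)
    (hineq : x + y ≤ θ * S * (x ^ (ps / p) + y ^ (qs / q))) :
    x + y ≥
      min ((2 * S) ^ (-(q / (qs - q)))) (S ^ (-(p / (ps - p)))) *
        min (θ ^ (-(p / (ps - p)))) (θ ^ (-(q / (qs - q)))) := by
  have hp0 : 0 < p := by linarith
  have hq0 : 0 < q := by linarith
  have hpN : p < N := by linarith
  have hNp : (0:ℝ) < N - p := by linarith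
  have hNq : (0:ℝ) < N - q := by linarith
  -- exponents
  have hA : ps / p = N / (N - p) := by rw [hps]; field_simp
  have hB : qs / q = N / (N - q) := by rw [hqs]; field_simp
  have hA1 : 1 < ps / p := by rw [hA, lt_div_iff₀ hNp]; linarith
  have hB1 : 1 < qs / q := by rw [hB, lt_div_iff₀ hNq]; linarith
  have hAB : ps / p ≤ qs / q := by
    rw [hA, hB]
    exact div_le_div_of_nonneg_left (by positivity) hNq (by linarith)
  have hpsp : ps - p = p * p / (N - p) := by rw [hps]; first | (field_simp; ring) | field_simp
  have hqsq : qs - q = q * q / (N - q) := by rw [hqs]; first | (field_simp; ring) | field_simp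
  have ha : p / (ps - p) = (N - p) / p := by rw [hpsp]; first | (field_simp; ring) | field_simp
  have hb : q / (qs - q) = (N - q) / q := by rw [hqsq]; first | (field_simp; ring) | field_simp
  have ha0 : 0 < p / (ps - p) := by rw [ha]; positivity
  have hb0 : 0 < q / (qs - q) := by rw [hb]; positivity
  have haA : (p / (ps - p)) * (ps / p - 1) = 1 := by
    rw [ha, hA]; first | (field_simp; ring) | field_simp
  have hbB : (q / (qs - q)) * (qs / q - 1) = 1 := by
    rw [hb, hB]; first | (field_simp; ring) | field_simp
  set a := p / (ps - p)
  set b := q / (qs - q)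
  set A := ps / p
  set B := qs / q
  set t := x + y with ht
  by_cases hcase : x < 1 ∧ y < 1
  · -- both below 1: use exponent A
    obtain ⟨hx1, hy1⟩ := hcase
    have hyBA : y ^ B ≤ y ^ A := by
      rcases eq_or_lt_of_le hy with h0 | h0
      · rw [← h0, Real.zero_rpow (by linarith), Real.zero_rpow (by linarith)]
      · exact Real.rpow_le_rpow_of_exponent_ge h0 hy1.le hAB
    have hsum : x ^ A + y ^ B ≤ t ^ A :=
      le_trans (by linarith) (real_superadd hx hy hA1.le)
    have hkey : (θ * S) ^ (-a) ≤ t := by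
      apply key_aux hxy (by positivity) hA1 haA
      calc t ≤ θ * S * (x ^ A + y ^ B) := hineq
        _ ≤ θ * S * t ^ A := by
            have := mul_le_mul_of_nonneg_left hsum (by positivity : (0:ℝ) ≤ θ * S)
            linarith
    have hsplit : (θ * S) ^ (-a) = θ ^ (-a) * S ^ (-a) := Real.mul_rpow hθ.le hS.le
    have h1 : min ((2 * S) ^ (-b)) (S ^ (-a)) ≤ S ^ (-a) := min_le_right _ _
    have h2 : min (θ ^ (-a)) (θ ^ (-b)) ≤ θ ^ (-a) := min_le_left _ _
    calc min ((2 * S) ^ (-b)) (S ^ (-a)) * min (θ ^ (-a)) (θ ^ (-b))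
        ≤ S ^ (-a) * θ ^ (-a) := by
          apply mul_le_mul h1 h2 (le_min (by positivity) (by positivity)) (by positivity)
      _ = (θ * S) ^ (-a) := by rw [hsplit]; ring
      _ ≤ t := hkey
  · -- x ≥ 1 or y ≥ 1: use exponent B
    have hxAB : x ^ A ≤ t ^ B := by
      by_cases hx1 : 1 ≤ x
      · calc x ^ A ≤ x ^ B := Real.rpow_le_rpow_of_exponent_le hx1 hAB
          _ ≤ t ^ B := Real.rpow_le_rpow hx (by linarith) (by linarith)
      · push_neg at hx1
        have hy1 : 1 ≤ y := by
          by_contra hy1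
          exact hcase ⟨hx1, by push_neg at hy1; exact hy1⟩
        calc x ^ A ≤ 1 := Real.rpow_le_one hx hx1.le (by linarith)
          _ ≤ t ^ B := Real.one_le_rpow (by linarith) (by linarith)
    have hyB : y ^ B ≤ t ^ B := Real.rpow_le_rpow hy (by linarith) (by linarith)
    have hkey : (θ * S * 2) ^ (-b) ≤ t := by
      apply key_aux hxy (by positivity) hB1 hbB
      calc t ≤ θ * S * (x ^ A + y ^ B) := hineq
        _ ≤ θ * S * (2 * t ^ B) := by
            have hsum : x ^ A + y ^ B ≤ 2 * t ^ B := by linarith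
            have := mul_le_mul_of_nonneg_left hsum (by positivity : (0:ℝ) ≤ θ * S)
            linarith
        _ = θ * S * 2 * t ^ B := by ring
    have hsplit : (θ * S * 2) ^ (-b) = (2 * S) ^ (-b) * θ ^ (-b) := by
      rw [show θ * S * 2 = 2 * S * θ by ring, Real.mul_rpow (by positivity) hθ.le]
    have h1 : min ((2 * S) ^ (-b)) (S ^ (-a)) ≤ (2 * S) ^ (-b) := min_le_left _ _
    have h2 : min (θ ^ (-a)) (θ ^ (-b)) ≤ θ ^ (-b) := min_le_right _ _
    calc min ((2 * S) ^ (-b)) (S ^ (-a)) * min (θ ^ (-a)) (θ ^ (-b))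
        ≤ (2 * S) ^ (-b) * θ ^ (-b) := by
          apply mul_le_mul h1 h2 (le_min (by positivity) (by positivity)) (by positivity)
      _ = (θ * S * 2) ^ (-b) := hsplit.symm
      _ ≤ t := hkey
end

section
/- Let 1 < m < p < Q, let a₀, b₀, θ, κ > 0, and define f(t) := −κ + a₀ t^{p−m} − θ b₀ t^{Q−m} for t > 0, and T* := ( a₀ (p−m) / (θ b₀ (Q−m)) )^{1/(Q−p)}. If f(T*) > 0, then there exist T₁ and T₂ with 0 < T₁ < T* < T₂ such that f(T₁) = f(T₂) = 0, f(t) < 0 for all t ∈ (0, T₁) ∪ (T₂, ∞), and f(t) > 0 for all t ∈ (T₁, T₂). Moreover, T₁ > (κ/a₀)^{1/(p−m)}. -/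
set_option maxHeartbeats 1000000


/-- The two-root sign-pattern dichotomy for the auxiliary function
`f(t) = -κ + a₀ t^{p-m} - θ b₀ t^{Q-m}` from Section 5: if `f(T*) > 0` with
`T* = (a₀(p-m)/(θ b₀(Q-m)))^{1/(Q-p)}`, then there are `0 < T₁ < T* < T₂` with
`f(T₁) = f(T₂) = 0`, `f < 0` on `(0,T₁) ∪ (T₂,∞)`, `f > 0` on `(T₁,T₂)`, and
`T₁ > (κ/a₀)^{1/(p-m)}`. -/
theorem aux_function_two_roots (m p Q a₀ b₀ θ κ : ℝ)
    (hm : 1 < m) (hmp : m < p) (hpQ : p < Q)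
    (ha : 0 < a₀) (hb : 0 < b₀) (hθ : 0 < θ) (hκ : 0 < κ)
    (f : ℝ → ℝ) (hf : ∀ t, f t = -κ + a₀ * t ^ (p - m) - θ * b₀ * t ^ (Q - m))
    (T : ℝ) (hT : T = (a₀ * (p - m) / (θ * b₀ * (Q - m))) ^ (1 / (Q - p)))
    (hfT : 0 < f T) :
    ∃ T₁ T₂ : ℝ, 0 < T₁ ∧ T₁ < T ∧ T < T₂ ∧ f T₁ = 0 ∧ f T₂ = 0 ∧
      (∀ t : ℝ, 0 < t → t < T₁ → f t < 0) ∧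
      (∀ t : ℝ, T₂ < t → f t < 0) ∧
      (∀ t : ℝ, T₁ < t → t < T₂ → 0 < f t) ∧
      (κ / a₀) ^ (1 / (p - m)) < T₁ := by
  have hfe : f = fun t => -κ + a₀ * t ^ (p - m) - θ * b₀ * t ^ (Q - m) := funext hf
  subst hfe
  set c : ℝ := p - m with hc
  set e : ℝ := Q - m with he
  set d : ℝ := θ * b₀ with hd
  have hc0 : 0 < c := sub_pos.mpr hmp
  have he0 : 0 < e := sub_pos.mpr (hmp.trans hpQ)
  have hd0 : 0 < d := mul_pos hθ hb
  have hQp : 0 < Q - p := by linarith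
  have hec : e - c = Q - p := by rw [he, hc]; ring
  set A : ℝ := a₀ * c / (d * e) with hA
  have hA0 : 0 < A := div_pos (mul_pos ha hc0) (mul_pos hd0 he0)
  -- T basics
  have hT0 : 0 < T := by rw [hT]; exact Real.rpow_pos_of_pos hA0 _
  have hTpow : T ^ (Q - p) = A := by
    rw [hT, one_div, Real.rpow_inv_rpow hA0.le (ne_of_gt hQp)]
  -- continuity
  have hcont : Continuous (fun t : ℝ => -κ + a₀ * t ^ c - d * t ^ e) := by
    have h1 := Real.continuous_rpow_const hc0.le
    have h2 := Real.continuous_rpow_const he0.le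
    continuity
  -- derivative
  have hderiv : ∀ x : ℝ, x ≠ 0 →
      HasDerivAt (fun t : ℝ => -κ + a₀ * t ^ c - d * t ^ e)
        (a₀ * (c * x ^ (c - 1)) - d * (e * x ^ (e - 1))) x := by
    intro x hx
    have h := ((hasDerivAt_const x (-κ)).add
      ((Real.hasDerivAt_rpow_const (p := c) (Or.inl hx)).const_mul a₀)).sub
      ((Real.hasDerivAt_rpow_const (p := e) (Or.inl hx)).const_mul d)
    rw [zero_add] at h
    exact h
  -- key sign fact for the derivative
  have hsplit : ∀ x : ℝ, 0 < x → x ^ (e - 1) = x ^ (Q - p) * x ^ (c - 1) := by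
    intro x hx
    rw [← Real.rpow_add hx]
    congr 1
    rw [he, hc]; ring
  have hmono : StrictMonoOn (fun t : ℝ => -κ + a₀ * t ^ c - d * t ^ e) (Set.Icc 0 T) := by
    apply strictMonoOn_of_deriv_pos (convex_Icc 0 T) hcont.continuousOn
    intro x hx
    rw [interior_Icc] at hx
    obtain ⟨hx0, hxT⟩ := hx
    rw [((hderiv x (ne_of_gt hx0)).deriv)]
    have hlt : x ^ (Q - p) < A := by
      rw [← hTpow]
      exact Real.rpow_lt_rpow hx0.le hxT hQp
    have hxc : 0 < x ^ (c - 1) := Real.rpow_pos_of_pos hx0 _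
    have hkey : d * e * A = a₀ * c := by
      rw [hA]; field_simp
    have hlt2 : d * e * x ^ (Q - p) < a₀ * c := by
      calc d * e * x ^ (Q - p) < d * e * A :=
            (mul_lt_mul_iff_right₀ (mul_pos hd0 he0)).mpr hlt
        _ = a₀ * c := hkey
    rw [hsplit x hx0]
    nlinarith [mul_lt_mul_of_pos_right hlt2 hxc]
  have hanti : StrictAntiOn (fun t : ℝ => -κ + a₀ * t ^ c - d * t ^ e) (Set.Ici T) := by
    apply strictAntiOn_of_deriv_neg (convex_Ici T) hcont.continuousOn
    intro x hx
    rw [interior_Ici] at hx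
    have hx0 : 0 < x := hT0.trans hx
    rw [((hderiv x (ne_of_gt hx0)).deriv)]
    have hlt : A < x ^ (Q - p) := by
      rw [← hTpow]
      exact Real.rpow_lt_rpow hT0.le hx hQp
    have hxc : 0 < x ^ (c - 1) := Real.rpow_pos_of_pos hx0 _
    have hkey : d * e * A = a₀ * c := by
      rw [hA]; field_simp
    have hlt2 : a₀ * c < d * e * x ^ (Q - p) := by
      calc a₀ * c = d * e * A := hkey.symm
        _ < d * e * x ^ (Q - p) := (mul_lt_mul_iff_right₀ (mul_pos hd0 he0)).mpr hlt
    rw [hsplit x hx0]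
    nlinarith [mul_lt_mul_of_pos_right hlt2 hxc]
  -- value at 0
  have hf0 : (fun t : ℝ => -κ + a₀ * t ^ c - d * t ^ e) 0 = -κ := by
    simp [Real.zero_rpow (ne_of_gt hc0), Real.zero_rpow (ne_of_gt he0)]
  -- root T₁ in (0, T)
  obtain ⟨T₁, hT₁mem, hfT₁⟩ :=
    intermediate_value_Icc hT0.le hcont.continuousOn
      (a := 0) (b := T) (by
        refine Set.mem_Icc.mpr ⟨?_, hfT.le⟩
        show -κ + a₀ * (0:ℝ) ^ c - d * (0:ℝ) ^ e ≤ 0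
        rw [Real.zero_rpow (ne_of_gt hc0), Real.zero_rpow (ne_of_gt he0)]
        linarith)
  have hT₁0 : 0 < T₁ := by
    rcases lt_or_eq_of_le hT₁mem.1 with h | h
    · exact h
    · exfalso; rw [← h] at hfT₁; rw [hf0] at hfT₁; linarith
  have hT₁T : T₁ < T := by
    rcases lt_or_eq_of_le hT₁mem.2 with h | h
    · exact h
    · exfalso; rw [h] at hfT₁; linarith
  -- a point beyond T where f is negative
  set B : ℝ := (a₀ / d) ^ (1 / (Q - p)) with hB
  have hB0 : 0 < B := Real.rpow_pos_of_pos (div_pos ha hd0) _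
  set t₂ : ℝ := max T B + 1 with ht₂
  have ht₂T : T < t₂ := by
    rw [ht₂]; have := le_max_left T B; linarith
  have ht₂B : B < t₂ := by
    rw [ht₂]; have := le_max_right T B; linarith
  have ht₂0 : 0 < t₂ := hT0.trans ht₂T
  have hft₂ : (fun t : ℝ => -κ + a₀ * t ^ c - d * t ^ e) t₂ < 0 := by
    have hpow : a₀ / d < t₂ ^ (Q - p) := by
      have : B ^ (Q - p) < t₂ ^ (Q - p) := Real.rpow_lt_rpow hB0.le ht₂B hQp
      rwa [hB, one_div, Real.rpow_inv_rpow (div_pos ha hd0).le (ne_of_gt hQp)] at this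
    have hsp : t₂ ^ e = t₂ ^ (Q - p) * t₂ ^ c := by
      rw [← Real.rpow_add ht₂0]; congr 1; rw [he, hc]; ring
    have hc2 : 0 < t₂ ^ c := Real.rpow_pos_of_pos ht₂0 _
    have : a₀ < d * t₂ ^ (Q - p) := by
      rw [div_lt_iff₀ hd0] at hpow; linarith
    simp only []
    rw [hsp]
    nlinarith
  -- root T₂ in (T, t₂)
  obtain ⟨T₂, hT₂mem, hfT₂⟩ :=
    intermediate_value_Icc' ht₂T.le hcont.continuousOn
      (a := T) (b := t₂) (Set.mem_Icc.mpr ⟨hft₂.le, hfT.le⟩)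
  have hTT₂ : T < T₂ := by
    rcases lt_or_eq_of_le hT₂mem.1 with h | h
    · exact h
    · exfalso; rw [← h] at hfT₂; linarith
  refine ⟨T₁, T₂, hT₁0, hT₁T, hTT₂, hfT₁, hfT₂, ?_, ?_, ?_, ?_⟩
  · -- negative on (0, T₁)
    intro t ht0 htT₁
    have := hmono (Set.mem_Icc.mpr ⟨ht0.le, by linarith⟩)
      (Set.mem_Icc.mpr ⟨hT₁0.le, hT₁T.le⟩) htT₁
    rw [hfT₁] at this; exact this
  · -- negative on (T₂, ∞)
    intro t htT₂
    have := hanti (Set.mem_Ici.mpr hTT₂.le) (Set.mem_Ici.mpr (by linarith)) htT₂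
    rw [hfT₂] at this; exact this
  · -- positive on (T₁, T₂)
    intro t ht1 ht2
    rcases le_or_gt t T with h | h
    · have := hmono (Set.mem_Icc.mpr ⟨hT₁0.le, hT₁T.le⟩)
        (Set.mem_Icc.mpr ⟨by linarith, h⟩) ht1
      rw [hfT₁] at this; exact this
    · have := hanti (Set.mem_Ici.mpr h.le) (Set.mem_Ici.mpr hTT₂.le) ht2
      rw [hfT₂] at this; exact this
  · -- lower bound on T₁
    have hpos : κ < a₀ * T₁ ^ c := by
      have hT₁e : 0 < T₁ ^ e := Real.rpow_pos_of_pos hT₁0 _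
      simp only [] at hfT₁
      nlinarith
    have h1 : κ / a₀ < T₁ ^ c := (div_lt_iff₀ ha).mpr (by linarith [hpos, (mul_comm a₀ (T₁ ^ c))])
    have := Real.rpow_lt_rpow (div_pos hκ ha).le h1 (one_div_pos.mpr hc0)
    rw [one_div, Real.rpow_rpow_inv hT₁0.le (ne_of_gt hc0)] at this
    rw [one_div]
    exact this
end
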